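/- Let K be a compact metric space and (fₙ) a sequence of Baire class one functions on K converging pointwise to f. If sup_n β(fₙ) ≤ β₀ and γ((fₙ)) ≤ γ₀ for countable ordinals β₀, γ₀, then f is of Baire class one and β(f) ≤ β₀·γ₀. -/

import Mathlib

open Filter Topology Set Ordinal

noncomputable section

/-- One step of the oscillation derivation of `A` with respect to `f` and `ε`. -/
def oscStep {K : Type*} [TopologicalSpace K] (f : K → ℝ) (ε : ℝ) (A : Set K) : Set K :=
  {x ∈ A | ∀ U : Set K, IsOpen U → x ∈ U →
    ∃ x₁ ∈ U ∩ A, ∃ x₂ ∈ U ∩ A, ε ≤ |f x₁ - f x₂|}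

/-- The transfinite oscillation derivatives `H^α(f, ε)`. -/
def oscDeriv {K : Type*} [TopologicalSpace K] (f : K → ℝ) (ε : ℝ) (H : Set K) :
    Ordinal → Set K := fun α =>
  Ordinal.limitRecOn α H (fun _ ih => oscStep f ε ih)
    (fun _ _ ih => ⋂ (β : Ordinal) (h : _), ih β h)

/-- One step of the convergence derivation of `A` for a sequence `f`. -/
def seqStep {K : Type*} [TopologicalSpace K] (f : ℕ → K → ℝ) (ε : ℝ) (A : Set K) : Set K :=
  {x ∈ A | ∀ U : Set K, IsOpen U → x ∈ U → ∀ m : ℕ,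
    ∃ n₁ n₂ : ℕ, m < n₂ ∧ n₂ < n₁ ∧ ∃ x' ∈ U ∩ A, ε ≤ |f n₁ x' - f n₂ x'|}

/-- The transfinite convergence derivatives `H^α((fₙ), ε)`. -/
def seqDeriv {K : Type*} [TopologicalSpace K] (f : ℕ → K → ℝ) (ε : ℝ) (H : Set K) :
    Ordinal → Set K := fun α =>
  Ordinal.limitRecOn α H (fun _ ih => seqStep f ε ih)
    (fun _ _ ih => ⋂ (β : Ordinal) (h : _), ih β h)

open Classical in
/-- The least ordinal at which the family `S` is empty, and `ω₁` if there is none. -/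
def emptyIndex {K : Type*} (S : Ordinal → Set K) : Ordinal :=
  if _ : ∃ α, S α = ∅ then sInf {α | S α = ∅} else (Cardinal.aleph 1).ord

/-- The oscillation index `β_H(f, ε)`. -/
def betaEpsOn {K : Type*} [TopologicalSpace K] (f : K → ℝ) (ε : ℝ) (H : Set K) : Ordinal :=
  emptyIndex (oscDeriv f ε H)

/-- The oscillation index `β_H(f)`. -/
def betaOn {K : Type*} [TopologicalSpace K] (f : K → ℝ) (H : Set K) : Ordinal :=
  ⨆ ε : {e : ℝ // 0 < e}, betaEpsOn f ε.1 H

/-- The oscillation index `β(f)` over the whole space. -/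
def beta {K : Type*} [TopologicalSpace K] (f : K → ℝ) : Ordinal :=
  betaOn f Set.univ

/-- The convergence index `γ_H((fₙ), ε)`. -/
def gammaEpsOn {K : Type*} [TopologicalSpace K] (f : ℕ → K → ℝ) (ε : ℝ) (H : Set K) : Ordinal :=
  emptyIndex (seqDeriv f ε H)

/-- The convergence index `γ_H((fₙ))`. -/
def gammaOn {K : Type*} [TopologicalSpace K] (f : ℕ → K → ℝ) (H : Set K) : Ordinal :=
  ⨆ ε : {e : ℝ // 0 < e}, gammaEpsOn f ε.1 H

/-- The convergence index `γ((fₙ))` over the whole space. -/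
def gamma {K : Type*} [TopologicalSpace K] (f : ℕ → K → ℝ) : Ordinal :=
  gammaOn f Set.univ

/-- A function is of Baire class one if it is a pointwise limit of continuous functions. -/
def BaireOne {K : Type*} [TopologicalSpace K] (f : K → ℝ) : Prop :=
  ∃ F : ℕ → K → ℝ, (∀ n, Continuous (F n)) ∧
    ∀ x, Tendsto (fun n => F n x) atTop (nhds (f x))

/-- `f` is of Baire class one on the subspace `F`. -/
def BaireOneOn {K : Type*} [TopologicalSpace K] (f : K → ℝ) (F : Set K) : Prop :=
  ∃ g : ℕ → F → ℝ, (∀ n, Continuous (g n)) ∧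
    ∀ x : F, Tendsto (fun n => g n x) atTop (nhds (f x))

/-- `g` is a convex block combination of `f`. -/
def ConvexBlockOf {K : Type*} (g f : ℕ → K → ℝ) : Prop :=
  ∃ a : ℕ → ℝ, ∃ p : ℕ → ℕ, (∀ k, 0 ≤ a k) ∧ StrictMono p ∧ p 0 = 0 ∧
    (∀ n, ∑ k ∈ Finset.Ioc (p n) (p (n + 1)), a k = 1) ∧
    ∀ n x, g n x = ∑ k ∈ Finset.Ioc (p n) (p (n + 1)), a k * f k x

end


set_option linter.unusedSectionVars false
set_option linter.unnecessarySimpa false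
set_option linter.unusedTactic false
set_option maxHeartbeats 1000000

noncomputable section Auxiliary


section DerivLemmas

variable {K : Type*} [TopologicalSpace K]

theorem oscDeriv_zero (f : K → ℝ) (ε : ℝ) (H : Set K) : oscDeriv f ε H 0 = H :=
  Ordinal.limitRecOn_zero _ _ _

theorem oscDeriv_succ (f : K → ℝ) (ε : ℝ) (H : Set K) (α : Ordinal) :
    oscDeriv f ε H (Order.succ α) = oscStep f ε (oscDeriv f ε H α) :=
  Ordinal.limitRecOn_succ _ _ _ _

theorem oscDeriv_limit (f : K → ℝ) (ε : ℝ) (H : Set K) {α : Ordinal} (hα : Order.IsSuccLimit α) :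
    oscDeriv f ε H α = ⋂ (β : Ordinal) (_ : β < α), oscDeriv f ε H β :=
  Ordinal.limitRecOn_limit _ _ _ _ hα

theorem seqDeriv_zero (f : ℕ → K → ℝ) (ε : ℝ) (H : Set K) : seqDeriv f ε H 0 = H :=
  Ordinal.limitRecOn_zero _ _ _

theorem seqDeriv_succ (f : ℕ → K → ℝ) (ε : ℝ) (H : Set K) (α : Ordinal) :
    seqDeriv f ε H (Order.succ α) = seqStep f ε (seqDeriv f ε H α) :=
  Ordinal.limitRecOn_succ _ _ _ _

theorem seqDeriv_limit (f : ℕ → K → ℝ) (ε : ℝ) (H : Set K) {α : Ordinal} (hα : Order.IsSuccLimit α) :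
    seqDeriv f ε H α = ⋂ (β : Ordinal) (_ : β < α), seqDeriv f ε H β :=
  Ordinal.limitRecOn_limit _ _ _ _ hα

theorem oscStep_subset (f : K → ℝ) (ε : ℝ) (A : Set K) : oscStep f ε A ⊆ A := sep_subset _ _

theorem seqStep_subset (f : ℕ → K → ℝ) (ε : ℝ) (A : Set K) : seqStep f ε A ⊆ A := sep_subset _ _

theorem deriv_antitone_of {S : Ordinal → Set K}
    (hsucc : ∀ α, S (Order.succ α) ⊆ S α)
    (hlim : ∀ α, Order.IsSuccLimit α → S α = ⋂ (β : Ordinal) (_ : β < α), S β)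
    {β α : Ordinal} (h : β ≤ α) : S α ⊆ S β := by
  induction α using Ordinal.induction with
  | h α IH =>
    rcases Ordinal.zero_or_succ_or_isSuccLimit α with h0 | ⟨a, rfl⟩ | hl
    · subst h0; rw [nonpos_iff_eq_zero.mp h]
    · rcases eq_or_lt_of_le h with rfl | hlt
      · exact fun x hx => hx
      · exact (hsucc a).trans (IH a (Order.lt_succ a) (Order.le_of_lt_succ hlt))
    · rcases eq_or_lt_of_le h with rfl | hlt
      · exact fun x hx => hx
      · rw [hlim α hl]
        exact fun x hx => (Set.mem_iInter₂.mp hx) β hlt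

theorem oscDeriv_antitone (f : K → ℝ) (ε : ℝ) (H : Set K) {β α : Ordinal} (h : β ≤ α) :
    oscDeriv f ε H α ⊆ oscDeriv f ε H β :=
  deriv_antitone_of (fun α => by rw [oscDeriv_succ]; exact oscStep_subset _ _ _)
    (fun α hl => oscDeriv_limit f ε H hl) h

theorem seqDeriv_antitone (f : ℕ → K → ℝ) (ε : ℝ) (H : Set K) {β α : Ordinal} (h : β ≤ α) :
    seqDeriv f ε H α ⊆ seqDeriv f ε H β :=
  deriv_antitone_of (fun α => by rw [seqDeriv_succ]; exact seqStep_subset _ _ _)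
    (fun α hl => seqDeriv_limit f ε H hl) h

theorem emptyIndex_le_of_empty {S : Ordinal → Set K} {μ : Ordinal} (h : S μ = ∅) :
    emptyIndex S ≤ μ := by
  rw [emptyIndex, dif_pos ⟨μ, h⟩]
  exact csInf_le' h

theorem empty_of_emptyIndex_le {S : Ordinal → Set K}
    (hanti : ∀ ⦃a b : Ordinal⦄, a ≤ b → S b ⊆ S a) {μ : Ordinal}
    (h1 : emptyIndex S ≤ μ) (h2 : μ < (Cardinal.aleph 1).ord) : S μ = ∅ := by
  rw [emptyIndex] at h1
  split_ifs at h1 with hex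
  · have hmem : S (sInf {α | S α = ∅}) = ∅ := csInf_mem (s := {α | S α = ∅}) hex
    exact eq_empty_of_subset_empty (hmem ▸ hanti h1)
  · exact absurd (lt_of_lt_of_le h2 h1) (lt_irrefl _)

theorem betaEpsOn_le_betaOn (f : K → ℝ) {ε : ℝ} (hε : 0 < ε) (H : Set K) :
    betaEpsOn f ε H ≤ betaOn f H :=
  le_ciSup (Ordinal.bddAbove_range _) (⟨ε, hε⟩ : {e : ℝ // 0 < e})

theorem gammaEpsOn_le_gammaOn (f : ℕ → K → ℝ) {ε : ℝ} (hε : 0 < ε) (H : Set K) :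
    gammaEpsOn f ε H ≤ gammaOn f H :=
  le_ciSup (Ordinal.bddAbove_range _) (⟨ε, hε⟩ : {e : ℝ // 0 < e})

/-- The core combinatorial lemma: the oscillation derivation of the limit function is controlled
by the oscillation derivations of the `F n` and the convergence derivation. -/
theorem main_inclusion (F : ℕ → K → ℝ) (f : K → ℝ)
    (hconv : ∀ x, Tendsto (fun n => F n x) atTop (nhds (f x)))
    {β₀ : Ordinal} (hβ₀ : β₀ < (Cardinal.aleph 1).ord)
    (hβ : ∀ n, beta (F n) ≤ β₀) {ε : ℝ} (hε : 0 < ε) :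
    ∀ α : Ordinal, oscDeriv f ε univ (β₀ * α) ⊆ seqDeriv F (ε/4) univ α := by
  intro α
  induction α using Ordinal.induction with
  | h α IH =>
    rcases Ordinal.zero_or_succ_or_isSuccLimit α with h0 | ⟨a, rfl⟩ | hl
    · subst h0; rw [mul_zero, oscDeriv_zero, seqDeriv_zero]
    · -- successor case
      rw [seqDeriv_succ]
      intro x hx
      have hxa : x ∈ oscDeriv f ε univ (β₀ * a) :=
        oscDeriv_antitone f ε univ (le_trans (le_self_add)
          (le_of_eq (Ordinal.mul_succ β₀ a).symm)) hx
      have hxD : x ∈ seqDeriv F (ε/4) univ a := IH a (Order.lt_succ a) hxa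
      by_contra hcon
      simp only [seqStep, Set.mem_sep_iff, not_and, not_forall, not_exists] at hcon
      obtain ⟨U, hUo, hxU, m, hm⟩ := hcon hxD
      -- hm : ∀ n₁ n₂, ¬(m < n₂ ∧ n₂ < n₁ ∧ ∃ x' ∈ U ∩ _, ε/4 ≤ ...)
      have hsmall : ∀ n₁ n₂, m < n₂ → n₂ < n₁ → ∀ x' ∈ U ∩ seqDeriv F (ε/4) univ a,
          |F n₁ x' - F n₂ x'| < ε/4 := by
        intro n₁ n₂ h1 h2 x' hx'
        exact lt_of_not_ge (hm n₁ n₂ h1 h2 x' hx')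
      set g := F (m+1) with hg
      have happrox : ∀ x' ∈ U ∩ seqDeriv F (ε/4) univ a, |f x' - g x'| ≤ ε/4 := by
        intro x' hx'
        have ht : Tendsto (fun n => |F n x' - g x'|) atTop (nhds (|f x' - g x'|)) :=
          ((hconv x').sub tendsto_const_nhds).abs
        refine le_of_tendsto ht ?_
        filter_upwards [eventually_ge_atTop (m+2)] with n hn
        exact le_of_lt (hsmall n (m+1) (Nat.lt_succ_self m) (by omega) x' hx')
      -- inner induction
      have hinner : ∀ δ : Ordinal, oscDeriv f ε univ (β₀ * a + δ) ∩ U ⊆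
          oscDeriv g (ε/2) univ δ := by
        intro δ
        induction δ using Ordinal.induction with
        | h δ IHin =>
          rcases Ordinal.zero_or_succ_or_isSuccLimit δ with h0 | ⟨d, rfl⟩ | hld
          · subst h0; rw [oscDeriv_zero]; exact fun y _ => mem_univ y
          · rintro y ⟨hyE, hyU⟩
            rw [Ordinal.add_succ] at hyE
            rw [oscDeriv_succ] at hyE ⊢
            have hyEd : y ∈ oscDeriv f ε univ (β₀ * a + d) := oscStep_subset _ _ _ hyE
            have hyGd : y ∈ oscDeriv g (ε/2) univ d :=
              IHin d (Order.lt_succ d) ⟨hyEd, hyU⟩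
            refine ⟨hyGd, fun V hVo hyV => ?_⟩
            obtain ⟨y₁, ⟨hy₁W, hy₁E⟩, y₂, ⟨hy₂W, hy₂E⟩, hy12⟩ :=
              hyE.2 (V ∩ U) (hVo.inter hUo) ⟨hyV, hyU⟩
            have hy₁G : y₁ ∈ oscDeriv g (ε/2) univ d :=
              IHin d (Order.lt_succ d) ⟨hy₁E, hy₁W.2⟩
            have hy₂G : y₂ ∈ oscDeriv g (ε/2) univ d :=
              IHin d (Order.lt_succ d) ⟨hy₂E, hy₂W.2⟩
            have hy₁D : y₁ ∈ U ∩ seqDeriv F (ε/4) univ a :=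
              ⟨hy₁W.2, IH a (Order.lt_succ a)
                (oscDeriv_antitone f ε univ (le_self_add) hy₁E)⟩
            have hy₂D : y₂ ∈ U ∩ seqDeriv F (ε/4) univ a :=
              ⟨hy₂W.2, IH a (Order.lt_succ a)
                (oscDeriv_antitone f ε univ (le_self_add) hy₂E)⟩
            have h1 := happrox y₁ hy₁D
            have h2 := happrox y₂ hy₂D
            refine ⟨y₁, ⟨hy₁W.1, hy₁G⟩, y₂, ⟨hy₂W.1, hy₂G⟩, ?_⟩
            have t1 : |f y₁ - f y₂| ≤ |f y₁ - g y₁| + |g y₁ - g y₂| + |g y₂ - f y₂| := by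
              have := abs_sub_le (f y₁) (g y₁) (f y₂)
              have := abs_sub_le (g y₁) (g y₂) (f y₂)
              linarith [abs_sub_le (f y₁) (g y₁) (f y₂), abs_sub_le (g y₁) (g y₂) (f y₂)]
            have h2' : |g y₂ - f y₂| = |f y₂ - g y₂| := abs_sub_comm _ _
            linarith [h2' ▸ h2]
          · rintro y ⟨hyE, hyU⟩
            rw [oscDeriv_limit g (ε/2) univ hld]
            refine Set.mem_iInter₂.mpr fun d hd => ?_
            exact IHin d hd ⟨oscDeriv_antitone f ε univ
              (add_le_add_right (le_of_lt hd) _) hyE, hyU⟩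
      -- conclude the successor case
      have hβm : betaEpsOn g (ε/2) univ ≤ β₀ :=
        le_trans (betaEpsOn_le_betaOn g (by linarith) univ) (hβ (m+1))
      have hGempty : oscDeriv g (ε/2) univ (betaEpsOn g (ε/2) univ) = ∅ :=
        empty_of_emptyIndex_le (fun _ _ h => oscDeriv_antitone g (ε/2) univ h)
          le_rfl (lt_of_le_of_lt hβm hβ₀)
      have hxE' : x ∈ oscDeriv f ε univ (β₀ * a + betaEpsOn g (ε/2) univ) :=
        oscDeriv_antitone f ε univ
          (le_trans (add_le_add_right hβm _) (le_of_eq (Ordinal.mul_succ β₀ a).symm)) hx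
      have := hinner (betaEpsOn g (ε/2) univ) ⟨hxE', hxU⟩
      rw [hGempty] at this
      exact this
    · -- limit case
      intro x hx
      rw [seqDeriv_limit F (ε/4) univ hl]
      refine Set.mem_iInter₂.mpr fun b hb => ?_
      exact IH b hb (oscDeriv_antitone f ε univ (mul_le_mul_right (le_of_lt hb) β₀) hx)

theorem beta_le_mul (F : ℕ → K → ℝ) (f : K → ℝ)
    (hconv : ∀ x, Tendsto (fun n => F n x) atTop (nhds (f x)))
    {β₀ γ₀ : Ordinal} (hβ₀ : β₀ < (Cardinal.aleph 1).ord) (hγ₀ : γ₀ < (Cardinal.aleph 1).ord)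
    (hβ : ∀ n, beta (F n) ≤ β₀) (hγ : gamma F ≤ γ₀) : beta f ≤ β₀ * γ₀ := by
  refine ciSup_le fun ⟨ε, hε⟩ => ?_
  have hε4 : (0:ℝ) < ε/4 := by linarith
  have hγε : gammaEpsOn F (ε/4) univ ≤ γ₀ := le_trans (gammaEpsOn_le_gammaOn F hε4 univ) hγ
  have hDempty : seqDeriv F (ε/4) univ (gammaEpsOn F (ε/4) univ) = ∅ :=
    empty_of_emptyIndex_le (fun _ _ h => seqDeriv_antitone F (ε/4) univ h)
      le_rfl (lt_of_le_of_lt hγε hγ₀)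
  have h1 : oscDeriv f ε univ (β₀ * gammaEpsOn F (ε/4) univ) = ∅ := by
    have := main_inclusion F f hconv hβ₀ hβ hε (gammaEpsOn F (ε/4) univ)
    rw [hDempty] at this
    exact eq_empty_of_subset_empty this
  calc betaEpsOn f ε univ ≤ β₀ * gammaEpsOn F (ε/4) univ := emptyIndex_le_of_empty h1
    _ ≤ β₀ * γ₀ := mul_le_mul_right hγε β₀

end DerivLemmas


noncomputable def rcl (c a : ℝ) : ℝ := max (-c) (min c a)
theorem rcl_abs_le {c : ℝ} (hc : 0 ≤ c) (a : ℝ) : |rcl c a| ≤ c := by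
  rw [abs_le, rcl]; exact ⟨le_max_left _ _, max_le (by linarith) (min_le_left _ _)⟩
theorem rcl_eq_self {c a : ℝ} (ha : |a| ≤ c) : rcl c a = a := by
  rw [abs_le] at ha; rw [rcl, min_eq_right ha.2, max_eq_right ha.1]
theorem rcl_continuous (c : ℝ) : Continuous (rcl c) :=
  continuous_const.max (continuous_const.min continuous_id)
theorem rcl_lipschitz (c : ℝ) (a b : ℝ) : |rcl c a - rcl c b| ≤ |a - b| := by
  have h1 : |max (-c) (min c a) - max (-c) (min c b)| ≤ |min c a - min c b| := by
    rw [max_comm (-c) (min c a), max_comm (-c) (min c b)]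
    exact abs_max_sub_max_le_abs _ _ _
  have h2 : |min c a - min c b| ≤ |a - b| := by
    simpa using abs_min_sub_min_le_max c a c b
  exact le_trans h1 h2
theorem baireOne_rcl {K : Type*} [TopologicalSpace K] {f : K → ℝ} (hf : BaireOne f) (c : ℝ) :
    BaireOne (fun x => rcl c (f x)) := by
  obtain ⟨F, hFc, hFl⟩ := hf
  exact ⟨fun n x => rcl c (F n x), fun n => (rcl_continuous c).comp (hFc n),
    fun x => ((rcl_continuous c).continuousAt).tendsto.comp (hFl x)⟩
theorem baireOne_const {K : Type*} [TopologicalSpace K] (c : ℝ) : BaireOne (fun _ : K => c) :=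
  ⟨fun _ _ => c, fun _ => continuous_const, fun _ => tendsto_const_nhds⟩
theorem BaireOne.sub {K : Type*} [TopologicalSpace K] {f g : K → ℝ}
    (hf : BaireOne f) (hg : BaireOne g) : BaireOne (fun x => f x - g x) := by
  obtain ⟨F, hFc, hFl⟩ := hf
  obtain ⟨G, hGc, hGl⟩ := hg
  exact ⟨fun n x => F n x - G n x, fun n => (hFc n).sub (hGc n),
    fun x => (hFl x).sub (hGl x)⟩

theorem sum_geom_half_Ico (a b : ℕ) :
    ∑ k ∈ Finset.Ico a b, ((1:ℝ)/2)^k ≤ 2 * (1/2)^a := by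
  rcases le_or_gt a b with hab | hab
  · rw [Finset.sum_Ico_eq_sum_range]
    have : ∀ k, ((1:ℝ)/2)^(a + k) = (1/2)^a * (1/2)^k := fun k => pow_add _ _ _
    rw [Finset.sum_congr rfl (fun k _ => this k), ← Finset.mul_sum]
    have h2 : ∑ i ∈ Finset.range (b - a), ((1:ℝ)/2)^i ≤ 2 := sum_geometric_two_le _
    have hp : (0:ℝ) ≤ (1/2)^a := by positivity
    nlinarith
  · rw [Finset.Ico_eq_empty (by omega), Finset.sum_empty]
    positivity

/-- uniform limits of Baire one functions are Baire one -/
theorem baireOne_of_uniform_approx {K : Type*} [TopologicalSpace K] {f : K → ℝ}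
    (g : ℕ → K → ℝ) (hg : ∀ k, BaireOne (g k))
    (happ : ∀ k x, |g k x - f x| ≤ (1/2:ℝ)^k) : BaireOne f := by
  classical
  set M : ℕ → ℝ := fun k => 2 * (1/2)^k with hM
  have hMpos : ∀ k, (0:ℝ) ≤ M k := fun k => by rw [hM]; positivity
  set h : ℕ → K → ℝ := fun k x => g (k+1) x - g k x with hh
  have hhB : ∀ k, BaireOne (h k) := fun k => (hg (k+1)).sub (hg k)
  have hhM : ∀ k x, |h k x| ≤ M k := by
    intro k x
    have h1 := happ (k+1) x
    have h2 := happ k x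
    have : |h k x| ≤ |g (k+1) x - f x| + |g k x - f x| := by
      rw [hh]
      have := abs_sub (g (k+1) x - f x) (g k x - f x)
      calc |g (k+1) x - g k x| = |(g (k+1) x - f x) - (g k x - f x)| := by ring_nf
        _ ≤ |g (k+1) x - f x| + |g k x - f x| := abs_sub _ _
    have hle : ((1:ℝ)/2)^(k+1) ≤ (1/2)^k :=
      pow_le_pow_of_le_one (by norm_num) (by norm_num) (by omega)
    rw [hM]
    dsimp only
    linarith
  choose Q hQc hQl using hhB
  set φ : ℕ → ℕ → K → ℝ := fun k n x => rcl (M k) (Q k n x) with hφ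
  have hφc : ∀ k n, Continuous (φ k n) := fun k n => (rcl_continuous _).comp (hQc k n)
  have hφM : ∀ k n x, |φ k n x| ≤ M k := fun k n x => rcl_abs_le (hMpos k) _
  have hφl : ∀ k x, Tendsto (fun n => φ k n x) atTop (nhds (h k x)) := by
    intro k x
    have := ((rcl_continuous (M k)).continuousAt).tendsto.comp (hQl k x)
    rwa [Function.comp_def, rcl_eq_self (hhM k x)] at this
  obtain ⟨Γ, hΓc, hΓl⟩ := hg 0
  refine ⟨fun n x => Γ n x + ∑ k ∈ Finset.range n, φ k n x, ?_, ?_⟩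
  · exact fun n => (hΓc n).add (continuous_finset_sum _ fun k _ => hφc k n)
  · intro x
    -- f x - c n x = (g 0 x - Γ n x) + ∑_{k<n}(h k x - φ k n x) + (f x - g n x)
    have key : ∀ n, f x - (Γ n x + ∑ k ∈ Finset.range n, φ k n x)
        = (g 0 x - Γ n x) + (∑ k ∈ Finset.range n, (h k x - φ k n x)) + (f x - g n x) := by
      intro n
      have htel : ∑ k ∈ Finset.range n, h k x = g n x - g 0 x := by
        rw [hh]
        exact Finset.sum_range_sub (fun k => g k x) n
      rw [Finset.sum_sub_distrib, htel]
      ring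
    have hA : Tendsto (fun n => g 0 x - Γ n x) atTop (nhds 0) := by
      have := (tendsto_const_nhds (x := g 0 x)).sub (hΓl x)
      rwa [_root_.sub_self] at this
    have hC : Tendsto (fun n => f x - g n x) atTop (nhds 0) := by
      refine squeeze_zero_norm (a := fun n => (1/2:ℝ)^n) (fun n => ?_) ?_
      · rw [Real.norm_eq_abs, abs_sub_comm]
        exact happ n x
      · exact tendsto_pow_atTop_nhds_zero_of_lt_one (by norm_num) (by norm_num)
    have hB : Tendsto (fun n => ∑ k ∈ Finset.range n, (h k x - φ k n x)) atTop (nhds 0) := by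
      rw [Metric.tendsto_atTop]
      intro η hη
      obtain ⟨N₁, hN₁⟩ : ∃ N₁ : ℕ, 8 * ((1:ℝ)/2)^N₁ < η/2 := by
        obtain ⟨N, hN⟩ := exists_pow_lt_of_lt_one (show (0:ℝ) < η/16 by linarith)
          (show (1:ℝ)/2 < 1 by norm_num)
        exact ⟨N, by linarith⟩
      have hhead : Tendsto (fun n => ∑ k ∈ Finset.range N₁, (h k x - φ k n x)) atTop
          (nhds 0) := by
        have : Tendsto (fun n => ∑ k ∈ Finset.range N₁, (h k x - φ k n x)) atTop
            (nhds (∑ k ∈ Finset.range N₁, 0)) := by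
          refine tendsto_finset_sum _ fun k _ => ?_
          have := (tendsto_const_nhds (x := h k x)).sub (hφl k x)
          rwa [_root_.sub_self] at this
        simpa using this
      rw [Metric.tendsto_atTop] at hhead
      obtain ⟨N₂, hN₂⟩ := hhead (η/2) (by linarith)
      refine ⟨max N₁ N₂, fun n hn => ?_⟩
      have hn1 : N₁ ≤ n := le_trans (le_max_left _ _) hn
      have hn2 : N₂ ≤ n := le_trans (le_max_right _ _) hn
      have hsplit : ∑ k ∈ Finset.range n, (h k x - φ k n x)
          = ∑ k ∈ Finset.range N₁, (h k x - φ k n x)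
            + ∑ k ∈ Finset.Ico N₁ n, (h k x - φ k n x) := by
        rw [Finset.range_eq_Ico, Finset.range_eq_Ico, Finset.sum_Ico_consecutive _ (Nat.zero_le _) hn1]
      have htail : |∑ k ∈ Finset.Ico N₁ n, (h k x - φ k n x)| ≤ 8 * ((1:ℝ)/2)^N₁ := by
        refine le_trans (Finset.abs_sum_le_sum_abs _ _) ?_
        have hterm : ∀ k, |h k x - φ k n x| ≤ 4 * ((1:ℝ)/2)^k := by
          intro k
          have := abs_sub (h k x) (φ k n x)
          have h1 := hhM k x
          have h2 := hφM k n x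
          rw [hM] at h1 h2
          calc |h k x - φ k n x| ≤ |h k x| + |φ k n x| := abs_sub _ _
            _ ≤ 4 * (1/2)^k := by dsimp only at h1 h2; linarith
        refine le_trans (Finset.sum_le_sum fun k _ => hterm k) ?_
        calc ∑ k ∈ Finset.Ico N₁ n, 4 * ((1:ℝ)/2)^k
            = 4 * ∑ k ∈ Finset.Ico N₁ n, ((1:ℝ)/2)^k := by rw [Finset.mul_sum]
          _ ≤ 4 * (2 * (1/2)^N₁) :=
              mul_le_mul_of_nonneg_left (sum_geom_half_Ico N₁ n) (by norm_num)
          _ = 8 * (1/2)^N₁ := by ring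
      rw [Real.dist_eq, _root_.sub_zero, hsplit]
      have hd : |∑ k ∈ Finset.range N₁, (h k x - φ k n x)| < η/2 := by
        have := hN₂ n hn2
        rwa [Real.dist_eq, _root_.sub_zero] at this
      calc |∑ k ∈ Finset.range N₁, (h k x - φ k n x)
            + ∑ k ∈ Finset.Ico N₁ n, (h k x - φ k n x)|
          ≤ |∑ k ∈ Finset.range N₁, (h k x - φ k n x)|
            + |∑ k ∈ Finset.Ico N₁ n, (h k x - φ k n x)| := abs_add_le _ _
        _ < η/2 + (8 * ((1:ℝ)/2)^N₁) := by
            refine add_lt_add_of_lt_of_le hd htail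
        _ < η := by linarith
    have := (hA.add hB).add hC
    rw [add_zero, add_zero] at this
    -- this : Tendsto (fun n => A n + B n + C n) → 0
    have h2 : Tendsto (fun n => f x - (Γ n x + ∑ k ∈ Finset.range n, φ k n x)) atTop
        (nhds 0) := this.congr fun n => (key n).symm
    have h3 := (tendsto_const_nhds (x := f x)).sub h2
    rw [_root_.sub_zero] at h3
    refine h3.congr fun n => by ring


/-- telescoping sum -/
theorem telescope_prod (c : ℕ → ℝ) (a b : ℕ) (hab : a ≤ b) :
    ∑ i ∈ Finset.Ico a b, ((1 - c i) * ∏ k ∈ Finset.range i, c k)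
      = ∏ k ∈ Finset.range a, c k - ∏ k ∈ Finset.range b, c k := by
  induction b, hab using Nat.le_induction with
  | base => simp
  | succ b hab IH =>
    rw [Finset.sum_Ico_succ_top hab, IH, Finset.prod_range_succ]
    ring

open Classical in
theorem baireOne_firstHit {K : Type*} [MetricSpace K]
    (V : ℕ → Set K) (hVo : ∀ j, IsOpen (V j))
    (g : ℕ → K → ℝ) (hg : ∀ j, BaireOne (g j))
    {C : ℝ} (hC : 0 ≤ C) (hgC : ∀ j x, |g j x| ≤ C) :
    BaireOne (fun x => if h : ∃ j, x ∈ V j then g (Nat.find h) x else 0) := by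
  classical
  choose P hPc hPl using hg
  set G : ℕ → ℕ → K → ℝ := fun j n x => rcl C (P j n x) with hG
  have hGc : ∀ j n, Continuous (G j n) := fun j n => (rcl_continuous C).comp (hPc j n)
  have hGC : ∀ j n x, |G j n x| ≤ C := fun j n x => rcl_abs_le hC _
  have hGl : ∀ j x, Tendsto (fun n => G j n x) atTop (nhds (g j x)) := by
    intro j x
    have := ((rcl_continuous C).continuousAt).tendsto.comp (hPl j x)
    rwa [Function.comp_def, rcl_eq_self (hgC j x)] at this
  set χ : ℕ → ℕ → K → ℝ := fun j n x =>
    if (V j)ᶜ = ∅ then 1 else min 1 ((n : ℝ) * Metric.infDist x (V j)ᶜ) with hχ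
  have hχc : ∀ j n, Continuous (χ j n) := by
    intro j n
    simp only [hχ]
    split_ifs with h
    · exact continuous_const
    · exact continuous_const.min (continuous_const.mul (Metric.continuous_infDist_pt _))
  have hχ01 : ∀ j n x, 0 ≤ χ j n x ∧ χ j n x ≤ 1 := by
    intro j n x
    simp only [hχ]
    split_ifs with h
    · exact ⟨zero_le_one, le_rfl⟩
    · refine ⟨le_min zero_le_one (mul_nonneg (Nat.cast_nonneg n) Metric.infDist_nonneg),
        min_le_left _ _⟩
  have hχ0 : ∀ j n x, x ∉ V j → χ j n x = 0 := by
    intro j n x hx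
    simp only [hχ]
    rw [if_neg (Set.nonempty_iff_ne_empty.mp ⟨x, hx⟩),
      Metric.infDist_zero_of_mem (Set.mem_compl hx)]
    simp
  have hχ1 : ∀ j x, x ∈ V j → Tendsto (fun n => χ j n x) atTop (nhds 1) := by
    intro j x hx
    simp only [hχ]
    split_ifs with h
    · exact tendsto_const_nhds
    · have hcl : IsClosed (V j)ᶜ := (hVo j).isClosed_compl
      have hd : 0 < Metric.infDist x (V j)ᶜ :=
        (hcl.notMem_iff_infDist_pos (Set.nonempty_iff_ne_empty.mpr h)).1
          (by simpa using hx)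
      set d := Metric.infDist x (V j)ᶜ
      obtain ⟨N, hN⟩ := exists_nat_ge (1 / d)
      have : ∀ n ≥ N, min 1 ((n : ℝ) * d) = 1 := by
        intro n hn
        refine min_eq_left ?_
        have h1 : (1:ℝ)/d * d ≤ (N:ℝ) * d := by nlinarith
        have h2 : (N:ℝ) * d ≤ (n:ℝ) * d := by
          have : (N:ℝ) ≤ n := Nat.cast_le.mpr hn
          nlinarith
        rw [one_div, inv_mul_cancel₀ (ne_of_gt hd)] at h1
        linarith
      refine Tendsto.congr' ?_ tendsto_const_nhds
      filter_upwards [eventually_ge_atTop N] with n hn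
      exact (this n hn).symm
  set θ : ℕ → ℕ → K → ℝ := fun j n x =>
    χ j n x * ∏ i ∈ Finset.range j, (1 - χ i n x) with hθ
  have hθc : ∀ j n, Continuous (θ j n) := by
    intro j n
    exact (hχc j n).mul (continuous_finset_prod _ fun i _ => continuous_const.sub (hχc i n))
  have hθ0 : ∀ j n x, 0 ≤ θ j n x := by
    intro j n x
    exact mul_nonneg (hχ01 j n x).1 (Finset.prod_nonneg fun i _ => by linarith [(hχ01 i n x).2])
  refine ⟨fun n x => ∑ j ∈ Finset.range (n+1), θ j n x * G j n x, ?_, ?_⟩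
  · intro n
    exact continuous_finset_sum _ fun j _ => (hθc j n).mul (hGc j n)
  · intro x
    by_cases hx : ∃ j, x ∈ V j
    · beta_reduce
      rw [dif_pos hx]
      set j := Nat.find hx with hj
      have hxVj : x ∈ V j := Nat.find_spec hx
      have hxlt : ∀ i < j, x ∉ V i := fun i hi => Nat.find_min hx hi
      have hχi0 : ∀ i < j, ∀ n, χ i n x = 0 := fun i hi n => hχ0 i n x (hxlt i hi)
      have hprod1 : ∀ n, ∏ i ∈ Finset.range j, (1 - χ i n x) = 1 := by
        intro n
        exact Finset.prod_eq_one fun i hi => by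
          rw [hχi0 i (Finset.mem_range.mp hi) n]; ring
      have hθj : ∀ n, θ j n x = χ j n x := fun n => by simp only [hθ]; rw [hprod1 n]; ring
      -- main term tends to g j x
      have hmain : Tendsto (fun n => θ j n x * G j n x) atTop (nhds (g j x)) := by
        have := ((hχ1 j x hxVj).mul (hGl j x))
        rw [one_mul] at this
        refine this.congr fun n => by rw [hθj n]
      -- remainder bound
      have hrem : ∀ n ≥ j, |(∑ i ∈ Finset.range (n+1), θ i n x * G i n x)
          - θ j n x * G j n x| ≤ C * (1 - χ j n x) := by
        intro n hn
        have hjmem : j ∈ Finset.range (n+1) := Finset.mem_range.mpr (by omega)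
        rw [← Finset.add_sum_erase _ _ hjmem]
        rw [add_sub_cancel_left]
        have habs : |∑ i ∈ (Finset.range (n+1)).erase j, θ i n x * G i n x|
            ≤ ∑ i ∈ (Finset.range (n+1)).erase j, θ i n x * C := by
          refine le_trans (Finset.abs_sum_le_sum_abs _ _) (Finset.sum_le_sum fun i _ => ?_)
          rw [abs_mul, abs_of_nonneg (hθ0 i n x)]
          exact mul_le_mul_of_nonneg_left (hGC i n x) (hθ0 i n x)
        refine le_trans habs ?_
        -- split erase into below j and above j
        have hsplit : ∑ i ∈ (Finset.range (n+1)).erase j, θ i n x * C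
            ≤ (1 - χ j n x) * C := by
          have hbelow : ∀ i ∈ (Finset.range (n+1)).erase j, i < j → θ i n x * C = 0 := by
            intro i _ hij
            simp only [hθ]
            simp [hχi0 i hij n]
          have : ∑ i ∈ (Finset.range (n+1)).erase j, θ i n x * C
              = ∑ i ∈ Finset.Ico (j+1) (n+1), θ i n x * C := by
            refine (Finset.sum_subset_zero_on_sdiff ?_ ?_ (fun i _ => rfl)).symm
            · intro i hi
              rw [Finset.mem_Ico] at hi
              rw [Finset.mem_erase, Finset.mem_range]
              omega
            · intro i hi
              rw [Finset.mem_sdiff, Finset.mem_erase, Finset.mem_range, Finset.mem_Ico] at hi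
              exact hbelow i (by rw [Finset.mem_erase, Finset.mem_range]; omega) (by omega)
          rw [this, ← Finset.sum_mul]
          refine mul_le_mul_of_nonneg_right ?_ hC
          have hc : ∀ i, 0 ≤ 1 - χ i n x := fun i => by linarith [(hχ01 i n x).2]
          have htel : ∑ i ∈ Finset.Ico (j+1) (n+1), θ i n x
              = ∏ k ∈ Finset.range (j+1), (1 - χ k n x)
                - ∏ k ∈ Finset.range (n+1), (1 - χ k n x) := by
            simp only [hθ]
            have := telescope_prod (fun k => 1 - χ k n x) (j+1) (n+1) (by omega)
            simpa using this
          rw [htel, Finset.prod_range_succ, hprod1 n, one_mul]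
          have : 0 ≤ ∏ k ∈ Finset.range (n+1), (1 - χ k n x) :=
            Finset.prod_nonneg fun k _ => hc k
          linarith
        refine le_trans hsplit (le_of_eq (mul_comm _ _))
      have hremt : Tendsto (fun n => (∑ i ∈ Finset.range (n+1), θ i n x * G i n x)
          - θ j n x * G j n x) atTop (nhds 0) := by
        have hb : Tendsto (fun n => C * (1 - χ j n x)) atTop (nhds 0) := by
          have := (tendsto_const_nhds (x := (1:ℝ))).sub (hχ1 j x hxVj)
          rw [_root_.sub_self] at this
          simpa using (tendsto_const_nhds (x := C)).mul this
        refine squeeze_zero_norm' ?_ hb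
        filter_upwards [eventually_ge_atTop j] with n hn
        exact hrem n hn
      have := hremt.add hmain
      rw [zero_add] at this
      refine this.congr fun n => by ring
    · beta_reduce
      rw [dif_neg hx]
      push_neg at hx
      have : ∀ n, ∑ j ∈ Finset.range (n+1), θ j n x * G j n x = 0 := by
        intro n
        refine Finset.sum_eq_zero fun j _ => ?_
        simp only [hθ]
        rw [hχ0 j n x (hx j)]
        ring
      refine Tendsto.congr (fun n => (this n).symm) tendsto_const_nhds


section A

variable {K : Type*} [TopologicalSpace K]

theorem oscStep_isClosed {f : K → ℝ} {ε : ℝ} {A : Set K} (hA : IsClosed A) :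
    IsClosed (oscStep f ε A) := by
  refine isClosed_of_closure_subset fun y hy => ?_
  have hyA : y ∈ A := by
    have := closure_mono (Set.sep_subset A _) hy
    rwa [hA.closure_eq] at this
  refine ⟨hyA, fun U hUo hyU => ?_⟩
  obtain ⟨z, hzU, hzS⟩ := mem_closure_iff.mp hy U hUo hyU
  exact hzS.2 U hUo hzU

theorem oscDeriv_isClosed (f : K → ℝ) (ε : ℝ) {H : Set K} (hH : IsClosed H) (α : Ordinal) :
    IsClosed (oscDeriv f ε H α) := by
  induction α using Ordinal.induction with
  | h α IH =>
    rcases Ordinal.zero_or_succ_or_isSuccLimit α with h0 | ⟨a, rfl⟩ | hl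
    · subst h0; rw [oscDeriv_zero]; exact hH
    · rw [oscDeriv_succ]; exact oscStep_isClosed (IH a (Order.lt_succ a))
    · rw [oscDeriv_limit f ε H hl]
      exact isClosed_iInter fun β => isClosed_iInter fun hβ => IH β hβ

theorem oscStep_mono {f : K → ℝ} {ε : ℝ} {A B : Set K} (h : A ⊆ B) :
    oscStep f ε A ⊆ oscStep f ε B := by
  rintro x ⟨hxA, hx⟩
  refine ⟨h hxA, fun U hUo hxU => ?_⟩
  obtain ⟨x₁, hx₁, x₂, hx₂, hd⟩ := hx U hUo hxU
  exact ⟨x₁, ⟨hx₁.1, h hx₁.2⟩, x₂, ⟨hx₂.1, h hx₂.2⟩, hd⟩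

theorem oscDeriv_comp_subset {t f : K → ℝ} {ε : ℝ}
    (hc : ∀ y₁ y₂, ε ≤ |t y₁ - t y₂| → ε ≤ |f y₁ - f y₂|) (H : Set K) (α : Ordinal) :
    oscDeriv t ε H α ⊆ oscDeriv f ε H α := by
  induction α using Ordinal.induction with
  | h α IH =>
    rcases Ordinal.zero_or_succ_or_isSuccLimit α with h0 | ⟨a, rfl⟩ | hl
    · subst h0; rw [oscDeriv_zero, oscDeriv_zero]
    · rw [oscDeriv_succ, oscDeriv_succ]
      refine subset_trans ?_ (oscStep_mono (IH a (Order.lt_succ a)))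
      rintro x ⟨hxA, hx⟩
      refine ⟨hxA, fun U hUo hxU => ?_⟩
      obtain ⟨x₁, hx₁, x₂, hx₂, hd⟩ := hx U hUo hxU
      exact ⟨x₁, hx₁, x₂, hx₂, hc _ _ hd⟩
    · rw [oscDeriv_limit t ε H hl, oscDeriv_limit f ε H hl]
      exact fun x hx => Set.mem_iInter₂.mpr fun β hβ =>
        IH β hβ (Set.mem_iInter₂.mp hx β hβ)

end A

open Classical in
/-- the key transfinite construction: an ε-uniform Baire-one approximation -/
theorem baireOne_eps_approx {K : Type*} [MetricSpace K] [SecondCountableTopology K]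
    (t : K → ℝ) {B : ℝ} (hB : 0 ≤ B) (htB : ∀ x, |t x| ≤ B)
    {ε : ℝ} (hε : 0 < ε) {lam : Ordinal} (hterm : oscDeriv t ε Set.univ lam = ∅) :
    ∃ g : K → ℝ, BaireOne g ∧ ∀ x, |g x - t x| ≤ ε := by
  set E := oscDeriv t ε Set.univ with hE
  suffices h : ∀ α : Ordinal, ∃ g : K → ℝ, BaireOne g ∧ ∀ x ∉ E α, |g x - t x| ≤ ε by
    obtain ⟨g, hgB, hg⟩ := h lam
    exact ⟨g, hgB, fun x => hg x (by rw [hterm]; exact notMem_empty x)⟩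
  intro α
  induction α using Ordinal.induction with
  | h α IH =>
    rcases Ordinal.zero_or_succ_or_isSuccLimit α with h0 | ⟨a, rfl⟩ | hl
    · subst h0
      refine ⟨fun _ => 0, baireOne_const 0, fun x hx => absurd ?_ hx⟩
      rw [hE, oscDeriv_zero]; exact mem_univ x
    · -- successor case
      obtain ⟨g₀, hg₀B, hg₀⟩ := IH a (Order.lt_succ a)
      have hEaclosed : IsClosed (E a) := oscDeriv_isClosed t ε isClosed_univ a
      set S := E a \ E (Order.succ a) with hS
      -- choose good neighborhoods
      have hU : ∀ x : S, ∃ U : Set K, IsOpen U ∧ (x : K) ∈ U ∧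
          ∀ y₁ ∈ U ∩ E a, ∀ y₂ ∈ U ∩ E a, |t y₁ - t y₂| < ε := by
        rintro ⟨x, hxa, hxs⟩
        rw [hE, oscDeriv_succ] at hxs
        have : ¬ (∀ U : Set K, IsOpen U → x ∈ U →
            ∃ x₁ ∈ U ∩ E a, ∃ x₂ ∈ U ∩ E a, ε ≤ |t x₁ - t x₂|) := fun hcon => hxs ⟨hxa, hcon⟩
        push_neg at this
        obtain ⟨U, hUo, hxU, hU⟩ := this
        exact ⟨U, hUo, hxU, hU⟩
      choose U hUo hUx hUosc using hU
      obtain ⟨T, hTc, hTU⟩ := TopologicalSpace.isOpen_iUnion_countable U hUo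
      rcases T.eq_empty_or_nonempty with hTe | hTne
      · -- no new points: S is empty
        refine ⟨g₀, hg₀B, fun x hx => ?_⟩
        refine hg₀ x fun hxa => ?_
        have hxS : x ∈ S := ⟨hxa, hx⟩
        have : x ∈ ⋃ z, U z := Set.mem_iUnion.mpr ⟨⟨x, hxS⟩, hUx ⟨x, hxS⟩⟩
        rw [← hTU, hTe] at this
        simpa using this
      · obtain ⟨e, he⟩ := hTc.exists_eq_range hTne
        -- the open sets and values
        set V : ℕ → Set K := fun n => Nat.rec ((E a)ᶜ) (fun m Vm => Vm ∪ U (e m)) n with hV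
        have hVo : ∀ n, IsOpen (V n) := by
          intro n
          induction n with
          | zero => exact hEaclosed.isOpen_compl
          | succ m IHm => exact IHm.union (hUo (e m))
        set gg : ℕ → K → ℝ := fun n => Nat.rec (fun x => rcl (B + ε) (g₀ x))
          (fun m _ => fun _ => t ((e m) : K)) n with hgg
        have hggB : ∀ n, BaireOne (gg n) := by
          intro n
          cases n with
          | zero => exact baireOne_rcl hg₀B (B + ε)
          | succ m => exact baireOne_const _
        have hggC : ∀ n x, |gg n x| ≤ B + ε := by
          intro n x
          cases n with
          | zero => exact rcl_abs_le (by linarith) _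
          | succ m => exact le_trans (htB _) (by linarith)
        refine ⟨_, baireOne_firstHit V hVo gg hggB (by linarith) hggC, ?_⟩
        intro x hx
        by_cases hxa : x ∈ E a
        · -- x ∈ S : covered by some U (e m)
          have hxS : x ∈ S := ⟨hxa, hx⟩
          have hx1 : x ∈ ⋃ z, U z := Set.mem_iUnion.mpr ⟨⟨x, hxS⟩, hUx ⟨x, hxS⟩⟩
          rw [← hTU, he] at hx1
          obtain ⟨z, hz, hxz⟩ := Set.mem_iUnion₂.mp hx1
          obtain ⟨m, rfl⟩ := Set.mem_range.mp hz
          have hex : ∃ j, x ∈ V j := ⟨m + 1, Set.mem_union_right _ hxz⟩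
          beta_reduce
          rw [dif_pos hex]
          -- the first hit is a successor
          rcases Nat.eq_zero_or_pos (Nat.find hex) with hf0 | hfpos
          · exfalso
            have := Nat.find_spec hex
            rw [hf0] at this
            exact this hxa
          · obtain ⟨m', hm'⟩ : ∃ m', Nat.find hex = m' + 1 :=
              ⟨Nat.find hex - 1, by omega⟩
            have hspec := Nat.find_spec hex
            rw [hm'] at hspec
            have hnot : x ∉ V m' := Nat.find_min hex (by omega)
            have hxU' : x ∈ U (e m') := by
              rcases hspec with h | h
              · exact absurd h hnot
              · exact h
            have : |t x - t ((e m') : K)| < ε := by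
              refine hUosc (e m') x ⟨hxU', hxa⟩ ((e m') : K) ⟨hUx (e m'), (e m').2.1⟩
            rw [hm']
            calc |gg (m' + 1) x - t x| = |t ((e m') : K) - t x| := rfl
              _ = |t x - t ((e m') : K)| := abs_sub_comm _ _
              _ ≤ ε := le_of_lt this
        · -- x ∉ E a : first hit is 0
          have hex : ∃ j, x ∈ V j := ⟨0, hxa⟩
          beta_reduce
          rw [dif_pos hex]
          have hf0 : Nat.find hex = 0 := Nat.find_eq_zero hex |>.mpr hxa
          rw [hf0]
          have h1 : |rcl (B + ε) (g₀ x) - rcl (B + ε) (t x)| ≤ |g₀ x - t x| :=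
            rcl_lipschitz _ _ _
          rw [rcl_eq_self (le_trans (htB x) (by linarith))] at h1
          calc |gg 0 x - t x| = |rcl (B + ε) (g₀ x) - t x| := rfl
            _ ≤ |g₀ x - t x| := h1
            _ ≤ ε := hg₀ x hxa
    · -- limit case
      set ι := {β : Ordinal // β < α} with hι
      obtain ⟨T, hTc, hTU⟩ :=
        TopologicalSpace.isOpen_iUnion_countable (fun β : ι => (E β.1)ᶜ)
          (fun β => (oscDeriv_isClosed t ε isClosed_univ β.1).isOpen_compl)
      have hcompl : (E α)ᶜ = ⋃ β : ι, (E β.1)ᶜ := by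
        rw [hE, oscDeriv_limit t ε Set.univ hl]
        ext x
        simp only [Set.mem_compl_iff, Set.mem_iInter, Set.mem_iUnion, not_forall]
        constructor
        · rintro ⟨β, hβ, hx⟩; exact ⟨⟨β, hβ⟩, hx⟩
        · rintro ⟨⟨β, hβ⟩, hx⟩; exact ⟨β, hβ, hx⟩
      rcases T.eq_empty_or_nonempty with hTe | hTne
      · refine ⟨fun _ => 0, baireOne_const 0, fun x hx => absurd ?_ hx⟩
        by_contra hxE
        have : x ∈ (E α)ᶜ := hxE
        rw [hcompl, ← hTU, hTe] at this
        simpa using this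
      · obtain ⟨e, he⟩ := hTc.exists_eq_range hTne
        choose gs hgsB hgs using fun n : ℕ => IH (e n).1 (e n).2
        set V : ℕ → Set K := fun n => (E (e n).1)ᶜ with hV
        have hVo : ∀ n, IsOpen (V n) :=
          fun n => (oscDeriv_isClosed t ε isClosed_univ _).isOpen_compl
        set gg : ℕ → K → ℝ := fun n x => rcl (B + ε) (gs n x) with hgg
        refine ⟨_, baireOne_firstHit V hVo gg (fun n => baireOne_rcl (hgsB n) _) (by linarith)
            (fun n x => rcl_abs_le (by linarith) _), ?_⟩
        intro x hx
        have hx1 : x ∈ ⋃ β : ι, (E β.1)ᶜ := by rw [← hcompl]; exact hx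
        rw [← hTU, he] at hx1
        obtain ⟨z, hz, hxz⟩ := Set.mem_iUnion₂.mp hx1
        obtain ⟨m, rfl⟩ := Set.mem_range.mp hz
        have hex : ∃ j, x ∈ V j := ⟨m, hxz⟩
        beta_reduce
        rw [dif_pos hex]
        have hAll : ∀ j, x ∈ V j → |gg j x - t x| ≤ ε := by
          intro j hj
          have h1 : |rcl (B + ε) (gs j x) - rcl (B + ε) (t x)| ≤ |gs j x - t x| :=
            rcl_lipschitz _ _ _
          rw [rcl_eq_self (le_trans (htB x) (by linarith))] at h1
          exact le_trans h1 (hgs j x hj)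
        exact hAll _ (@Nat.find_spec (fun n => x ∈ V n)
          (fun a => Classical.propDecidable _) hex)

theorem baireOne_of_terminates {K : Type*} [MetricSpace K] [SecondCountableTopology K]
    (t : K → ℝ) {B : ℝ} (hB : 0 ≤ B) (htB : ∀ x, |t x| ≤ B)
    (hterm : ∀ ε : ℝ, 0 < ε → ∃ lam : Ordinal, oscDeriv t ε Set.univ lam = ∅) :
    BaireOne t := by
  have h : ∀ k : ℕ, ∃ g : K → ℝ, BaireOne g ∧ ∀ x, |g x - t x| ≤ (1/2:ℝ)^k := by
    intro k
    obtain ⟨lam, hlam⟩ := hterm ((1/2:ℝ)^k) (by positivity)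
    exact baireOne_eps_approx t hB htB (by positivity) hlam
  choose g hgB hg using h
  exact baireOne_of_uniform_approx g hgB hg


theorem arctan_lip (a b : ℝ) : |Real.arctan a - Real.arctan b| ≤ |a - b| := by
  have hlip : LipschitzWith 1 Real.arctan := by
    refine lipschitzWith_of_nnnorm_deriv_le Real.differentiable_arctan fun x => ?_
    rw [Real.deriv_arctan]
    have h1 : |1 / (1 + x^2)| ≤ 1 := by
      rw [abs_div, abs_one]
      rw [div_le_one (by positivity)]
      have : |1 + x^2| = 1 + x^2 := abs_of_pos (by positivity)
      rw [this]; nlinarith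
    have := h1
    rwa [← Real.norm_eq_abs, ← coe_nnnorm, ← NNReal.coe_one, NNReal.coe_le_coe] at this
  have := hlip.dist_le_mul a b
  rwa [Real.dist_eq, Real.dist_eq, NNReal.coe_one, one_mul] at this

/-- Transfer Baire-one along tan/arctan. -/
theorem baireOne_of_arctan {K : Type*} [TopologicalSpace K] {f : K → ℝ}
    (h : BaireOne (fun x => Real.arctan (f x))) : BaireOne f := by
  obtain ⟨q, hqc, hql⟩ := h
  set a : ℕ → ℝ := fun n => Real.pi/2 - 1/(n+1) with ha
  have hax : ∀ n, 0 < a n := by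
    intro n
    rw [ha]
    have hpi := Real.pi_gt_three
    have h1 : 1/((n:ℝ)+1) ≤ 1 := by
      rw [div_le_one (by positivity)]
      simp [Nat.one_le_cast]
    dsimp only
    linarith
  have halt : ∀ n, a n < Real.pi/2 := by
    intro n
    rw [ha]
    have : 0 < 1/((n:ℝ)+1) := by positivity
    dsimp only
    linarith
  have haeq : ∀ n : ℕ, Real.pi/2 - a n = 1/((n:ℝ)+1) := fun n => by rw [ha]; ring
  clear_value a
  refine ⟨fun n x => Real.tan (rcl (a n) (q n x)), ?_, ?_⟩
  · intro n
    rw [continuous_iff_continuousAt]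
    intro x
    have hy : |rcl (a n) (q n x)| ≤ a n := rcl_abs_le (le_of_lt (hax n)) _
    have hmem : -(Real.pi/2) < rcl (a n) (q n x) ∧ rcl (a n) (q n x) < Real.pi/2 := by
      rw [abs_le] at hy
      obtain ⟨hy1, hy2⟩ := hy
      have h1 := halt n
      exact ⟨by linarith, by linarith⟩
    have hcos : Real.cos (rcl (a n) (q n x)) ≠ 0 :=
      ne_of_gt (Real.cos_pos_of_mem_Ioo ⟨hmem.1, hmem.2⟩)
    exact (Real.continuousAt_tan.mpr hcos).tendsto.comp
      (((rcl_continuous (a n)).comp (hqc n)).continuousAt)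
  · intro x
    set y := Real.arctan (f x) with hy
    have hylt : |y| < Real.pi/2 :=
      abs_lt.mpr ⟨Real.neg_pi_div_two_lt_arctan _, Real.arctan_lt_pi_div_two _⟩
    have hconv : Tendsto (fun n => rcl (a n) (q n x)) atTop (nhds y) := by
      have hdiff : Tendsto (fun n => rcl (a n) (q n x) - y) atTop (nhds 0) := by
        refine squeeze_zero_norm' (a := fun n => |q n x - y|) ?_ ?_
        · -- eventually ‖rcl (a n) (q n x) - y‖ ≤ |q n x - y|
          obtain ⟨N, hN⟩ := exists_nat_ge (1/(Real.pi/2 - |y|))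
          refine eventually_atTop.mpr ⟨N, fun n hn => ?_⟩
          have hay : |y| ≤ a n := by
            have hpos : 0 < Real.pi/2 - |y| := by linarith
            have h1 : 1/((n:ℝ)+1) ≤ 1/(N+1) := by
              apply div_le_div_of_nonneg_left (by norm_num) (by positivity)
              have : (N:ℝ) ≤ n := Nat.cast_le.mpr hn
              linarith
            have h2 : 1/((N:ℝ)+1) ≤ Real.pi/2 - |y| := by
              rw [div_le_iff₀ (by positivity)]
              have h3 : 1/(Real.pi/2 - |y|) ≤ (N:ℝ) := hN
              rw [div_le_iff₀ hpos] at h3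
              nlinarith
            have h4 := haeq n
            linarith
          calc ‖rcl (a n) (q n x) - y‖ = |rcl (a n) (q n x) - rcl (a n) y| := by
                rw [Real.norm_eq_abs, rcl_eq_self hay]
            _ ≤ |q n x - y| := rcl_lipschitz _ _ _
        · -- |q n x - y| → 0
          have h := (hql x).sub (tendsto_const_nhds (x := y))
          have h0 : (fun x => Real.arctan (f x)) x - y = 0 := by rw [hy]; ring_nf
          rw [h0] at h
          simpa using h.abs
      have := hdiff.add (tendsto_const_nhds (x := y))
      rw [zero_add] at this
      exact this.congr fun n => by ring
    have hcos : Real.cos y ≠ 0 := by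
      refine ne_of_gt (Real.cos_pos_of_mem_Ioo ⟨?_, ?_⟩) <;> rw [abs_lt] at hylt
      · linarith [hylt.1]
      · exact hylt.2
    have htan : Tendsto (fun n => Real.tan (rcl (a n) (q n x))) atTop
        (nhds (Real.tan y)) := (Real.continuousAt_tan.mpr hcos).tendsto.comp hconv
    rwa [hy, Real.tan_arctan] at htan

-- cardinal arithmetic
theorem mul_lt_aleph_one {β₀ γ₀ : Ordinal} (hβ₀ : β₀ < (Cardinal.aleph 1).ord)
    (hγ₀ : γ₀ < (Cardinal.aleph 1).ord) : β₀ * γ₀ < (Cardinal.aleph 1).ord := by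
  rw [Cardinal.lt_ord] at *
  rw [Ordinal.card_mul]
  have h1 : Cardinal.aleph 1 = Order.succ (Cardinal.aleph0) := by
    rw [← Cardinal.aleph_zero, ← Cardinal.aleph_succ]
    norm_num
  rw [h1, Order.lt_succ_iff] at hβ₀ hγ₀ ⊢
  calc β₀.card * γ₀.card ≤ Cardinal.aleph0 * Cardinal.aleph0 :=
        mul_le_mul' hβ₀ hγ₀
    _ = Cardinal.aleph0 := Cardinal.aleph0_mul_aleph0


end Auxiliary

theorem statement5 {K : Type*} [MetricSpace K] [CompactSpace K]
    (F : ℕ → K → ℝ) (f : K → ℝ) (hB : ∀ n, BaireOne (F n))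
    (hconv : ∀ x, Tendsto (fun n => F n x) atTop (nhds (f x)))
    (β₀ γ₀ : Ordinal) (hβ₀ : β₀ < (Cardinal.aleph 1).ord) (hγ₀ : γ₀ < (Cardinal.aleph 1).ord)
    (hβ : ∀ n, beta (F n) ≤ β₀) (hγ : gamma F ≤ γ₀) :
    BaireOne f ∧ beta f ≤ β₀ * γ₀ := by
  have hbeta : beta f ≤ β₀ * γ₀ := beta_le_mul F f hconv hβ₀ hγ₀ hβ hγ
  refine ⟨?_, hbeta⟩
  have hmul : β₀ * γ₀ < (Cardinal.aleph 1).ord := mul_lt_aleph_one hβ₀ hγ₀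
  apply baireOne_of_arctan
  have hpi : (0:ℝ) ≤ Real.pi/2 := by positivity
  refine baireOne_of_terminates _ hpi (fun x => ?_) (fun ε hε => ?_)
  · exact le_of_lt (abs_lt.mpr ⟨Real.neg_pi_div_two_lt_arctan _,
      Real.arctan_lt_pi_div_two _⟩)
  · refine ⟨betaEpsOn f ε Set.univ, ?_⟩
    have h1 : oscDeriv f ε Set.univ (betaEpsOn f ε Set.univ) = ∅ := by
      refine empty_of_emptyIndex_le (fun _ _ h => oscDeriv_antitone f ε Set.univ h) le_rfl ?_
      calc betaEpsOn f ε Set.univ ≤ beta f := betaEpsOn_le_betaOn f hε Set.univ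
        _ ≤ β₀ * γ₀ := hbeta
        _ < (Cardinal.aleph 1).ord := hmul
    have h2 : oscDeriv (fun x => Real.arctan (f x)) ε Set.univ (betaEpsOn f ε Set.univ)
        ⊆ oscDeriv f ε Set.univ (betaEpsOn f ε Set.univ) := by
      refine oscDeriv_comp_subset (fun y₁ y₂ h => le_trans h (arctan_lip _ _)) _ _
    rw [h1] at h2
    exact eq_empty_of_subset_empty h2
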